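/- For every positive even integer N, the toric code ground state ψ_{C_cut} on the N × N square-lattice torus satisfies Λ_max(ψ_{C_cut})² = 2^{−(N²−1)}; that is, its geometric entanglement of spins is E_G(ψ_{C_cut}) = n_s − 1 = N² − 1, where n_s = N² is the number of stars (vertices). (Theorem 1.) -/

import Mathlib

/-!
For a product state `Φ = ⊗ φᵢ`, `|⟨Φ, ψ_C⟩| ≤ |C|^{-1/2} ∑_{x ∈ C} ∏ᵢ |φᵢ(xᵢ)|`. If the qubits split
into two parts `s`, `t` each of which determines a codeword, then by AM-GM each summand is at most
the mean of its squared factors over `s` and over `t`, and injectivity of the restrictions bounds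
each of the two resulting sums by `∏ᵢ (|φᵢ(0)|² + |φᵢ(1)|²) = 1`. Any computational basis state in
`C` attains `|C|^{-1/2}`, so `Λ_max(ψ_C)² = 1/|C|`.

The cut space is the image of the coboundary map `T ↦ (T v + T w)_{vw}`, so a cut is determined
by its values on any connected spanning set of edges. On the torus a "staircase" of edges and its
mirror image under swapping coordinates are two such complementary sets, and the kernel of the
coboundary consists of the two constant labellings, whence `|C_cut| = 2^{N²} / 2`.
-/

open scoped BigOperators
open scoped Classical

noncomputable section

namespace GeomEnt

def qInner {ι : Type} [Fintype ι] (φ ψ : (ι → ZMod 2) → ℂ) : ℂ :=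
  ∑ x : ι → ZMod 2, (starRingEnd ℂ) (φ x) * ψ x

def IsProductState {ι : Type} [Fintype ι] (Φ : (ι → ZMod 2) → ℂ) : Prop :=
  ∃ φ : ι → ZMod 2 → ℂ,
    (∀ i, ‖φ i 0‖ ^ 2 + ‖φ i 1‖ ^ 2 = 1) ∧
    ∀ x, Φ x = ∏ i, φ i (x i)

def LambdaMax {ι : Type} [Fintype ι] (ψ : (ι → ZMod 2) → ℂ) : ℝ :=
  sSup { r : ℝ | ∃ Φ, IsProductState Φ ∧ r = ‖qInner Φ ψ‖ }

def EG {ι : Type} [Fintype ι] (ψ : (ι → ZMod 2) → ℂ) : ℝ :=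
  - Real.logb 2 (LambdaMax ψ ^ 2)

/-- The code state of a linear code `C`: the uniform superposition over the codewords. -/
def codeState {ι : Type} [Fintype ι] (C : Set (ι → ZMod 2)) : (ι → ZMod 2) → ℂ :=
  fun x => if x ∈ C then (((Real.sqrt (Nat.card C))⁻¹ : ℝ) : ℂ) else 0

/-- Cut space of the N × N square-lattice torus: qubits on edges `(v, d)`,
edge `(v,0)` joining `v` and `v+(1,0)`, edge `(v,1)` joining `v` and `v+(0,1)`. -/
def Ccut (N : ℕ) : Set ((ZMod N × ZMod N) × Fin 2 → ZMod 2) :=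
  { x | ∃ T : ZMod N × ZMod N → ZMod 2,
      ∀ v : ZMod N × ZMod N,
        x (v, 0) = T v + T (v + (1, 0)) ∧ x (v, 1) = T v + T (v + (0, 1)) }


section CodeState

variable {ι : Type} [Fintype ι]

lemma sum_zmod_two {M : Type} [AddCommMonoid M] (f : ZMod 2 → M) : ∑ a, f a = f 0 + f 1 :=
  Fin.sum_univ_two f

lemma sum_prod_le_one_of_injOn {α : Type} [Fintype α] {S : Set (ι → α)} {s : Finset ι}
    (hS : S.InjOn s.restrict) (w : ι → α → ℝ) (hw0 : ∀ i a, 0 ≤ w i a)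
    (hw1 : ∀ i, ∑ a, w i a = 1) :
    ∑ x ∈ S.toFinset, ∏ i ∈ s, w i (x i) ≤ 1 := by
  have hinj : Set.InjOn s.restrict (S.toFinset : Set (ι → α)) := by simpa using hS
  calc ∑ x ∈ S.toFinset, ∏ i ∈ s, w i (x i)
      = ∑ z ∈ S.toFinset.image s.restrict, ∏ i : s, w i (z i) := by
        rw [Finset.sum_image hinj]
        exact Finset.sum_congr rfl fun x _ => (Finset.prod_coe_sort s _).symm
    _ ≤ ∑ z : s → α, ∏ i : s, w i (z i) :=
        Finset.sum_le_univ_sum_of_nonneg fun z => Finset.prod_nonneg fun i _ => hw0 i _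
    _ = 1 := by
        rw [← Fintype.prod_sum]
        exact Finset.prod_eq_one fun i _ => hw1 i

lemma norm_qInner_codeState_le_sum {C : Set (ι → ZMod 2)} {φ : ι → ZMod 2 → ℂ} :
    ‖qInner (fun x => ∏ i, φ i (x i)) (codeState C)‖ ≤
      (√(Nat.card C))⁻¹ * ∑ x ∈ C.toFinset, ∏ i, ‖φ i (x i)‖ := by
  rw [Finset.mul_sum, qInner, ← Finset.sum_subset (Finset.subset_univ C.toFinset)]
  · refine (norm_sum_le _ _).trans (Finset.sum_le_sum fun x hx => ?_)
    rw [Set.mem_toFinset] at hx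
    simp [codeState, hx, norm_prod, mul_comm, abs_of_nonneg]
  · intro x _ hx
    simp [codeState, Set.mem_toFinset.not.mp hx]

lemma norm_qInner_codeState_le {C : Set (ι → ZMod 2)} {s t : Finset ι} (hst : IsCompl s t)
    (hs : C.InjOn s.restrict) (ht : C.InjOn t.restrict)
    {Φ : (ι → ZMod 2) → ℂ} (hΦ : IsProductState Φ) :
    ‖qInner Φ (codeState C)‖ ≤ (√(Nat.card C))⁻¹ := by
  obtain ⟨φ, hφ, rfl⟩ : ∃ φ : ι → ZMod 2 → ℂ, (∀ i, ‖φ i 0‖ ^ 2 + ‖φ i 1‖ ^ 2 = 1) ∧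
      Φ = fun x => ∏ i, φ i (x i) := by
    obtain ⟨φ, hφ, hΦ⟩ := hΦ
    exact ⟨φ, hφ, funext hΦ⟩
  set w : ι → ZMod 2 → ℝ := fun i a => ‖φ i a‖ ^ 2
  have hw1 : ∀ i, ∑ a, w i a = 1 := fun i => by rw [sum_zmod_two]; exact hφ i
  have hw0 : ∀ i a, 0 ≤ w i a := fun i a => by positivity
  have hA := sum_prod_le_one_of_injOn hs w hw0 hw1
  have hAc := sum_prod_le_one_of_injOn ht w hw0 hw1
  have hsum : ∑ x ∈ C.toFinset, ∏ i, ‖φ i (x i)‖ ≤ 1 := by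
    calc ∑ x ∈ C.toFinset, ∏ i, ‖φ i (x i)‖
        ≤ ∑ x ∈ C.toFinset, (∏ i ∈ s, w i (x i) + ∏ i ∈ t, w i (x i)) / 2 := by
          refine Finset.sum_le_sum fun x _ => ?_
          rw [← hst.prod_mul_prod]
          simp only [w, Finset.prod_pow]
          nlinarith [sq_nonneg (∏ i ∈ s, ‖φ i (x i)‖ - ∏ i ∈ t, ‖φ i (x i)‖)]
      _ ≤ 1 := by
          rw [← Finset.sum_div, Finset.sum_add_distrib]
          linarith
  calc ‖qInner (fun x => ∏ i, φ i (x i)) (codeState C)‖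
      ≤ (√(Nat.card C))⁻¹ * ∑ x ∈ C.toFinset, ∏ i, ‖φ i (x i)‖ :=
        norm_qInner_codeState_le_sum
    _ ≤ (√(Nat.card C))⁻¹ := mul_le_of_le_one_right (by positivity) hsum

lemma exists_isProductState_norm_qInner_codeState_eq {C : Set (ι → ZMod 2)} {x₀}
    (hx₀ : x₀ ∈ C) :
    ∃ Φ, IsProductState Φ ∧ ‖qInner Φ (codeState C)‖ = (√(Nat.card C))⁻¹ := by
  refine ⟨fun x => if x = x₀ then 1 else 0,
    ⟨fun i a => if a = x₀ i then 1 else 0, fun i => ?_, fun x => ?_⟩, ?_⟩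
  · rw [← sum_zmod_two fun a => ‖(if a = x₀ i then 1 else 0 : ℂ)‖ ^ 2]
    simp [apply_ite]
  · simp [Fintype.prod_boole, funext_iff]
  · rw [qInner, Fintype.sum_eq_single x₀ fun x hx => by simp [hx]]
    simp [codeState, hx₀]

theorem lambdaMax_codeState {C : Set (ι → ZMod 2)} (hC : C.Nonempty) {s t : Finset ι}
    (hst : IsCompl s t) (hs : C.InjOn s.restrict) (ht : C.InjOn t.restrict) :
    LambdaMax (codeState C) = (√(Nat.card C))⁻¹ := by
  obtain ⟨x₀, hx₀⟩ := hC
  obtain ⟨Φ₀, hΦ₀, h₀⟩ := exists_isProductState_norm_qInner_codeState_eq hx₀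
  refine IsGreatest.csSup_eq ⟨⟨Φ₀, hΦ₀, h₀.symm⟩, ?_⟩
  rintro _ ⟨Φ, hΦ, rfl⟩
  exact norm_qInner_codeState_le hst hs ht hΦ

end CodeState

section Coboundary

variable {V ι : Type*}

def coboundary (G : Type*) [AddCommGroup G] (src tgt : ι → V) : (V → G) →+ (ι → G) where
  toFun T e := T (tgt e) - T (src e)
  map_zero' := by ext; simp
  map_add' T S := by ext; simp only [Pi.add_apply]; abel

variable {G : Type*} [AddCommGroup G] {src tgt : ι → V}

lemma injOn_restrict_range_coboundary {s : Finset ι}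
    (hs : ∀ D : V → G, (∀ e ∈ s, D (src e) = D (tgt e)) → ∀ v w, D v = D w) :
    (Set.range (coboundary G src tgt)).InjOn s.restrict := by
  rintro _ ⟨T, rfl⟩ _ ⟨S, rfl⟩ hTS
  have hD := hs (T - S) fun e he => by
    have := congrFun hTS ⟨e, he⟩
    simp only [Finset.restrict, coboundary, AddMonoidHom.coe_mk, ZeroHom.coe_mk] at this
    exact (sub_eq_sub_iff_sub_eq_sub.mp this).symm
  funext e
  have := hD (src e) (tgt e)
  simp only [coboundary, AddMonoidHom.coe_mk, ZeroHom.coe_mk, Pi.sub_apply] at this ⊢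
  exact sub_eq_sub_iff_sub_eq_sub.mpr this.symm

lemma ker_coboundary
    (h : ∀ D : V → G, (∀ e, D (src e) = D (tgt e)) → ∀ v w, D v = D w) [Nonempty V] :
    ((coboundary G src tgt).ker : Set (V → G)) = Set.range (Function.const V) := by
  ext T
  simp only [SetLike.mem_coe, AddMonoidHom.mem_ker]
  constructor
  · intro hT
    obtain ⟨v₀⟩ := ‹Nonempty V›
    refine ⟨T v₀, funext fun v => h T (fun e => ?_) v₀ v⟩
    simpa [coboundary, sub_eq_zero, eq_comm] using congrFun hT e
  · rintro ⟨g, rfl⟩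
    ext e
    simp [coboundary]

lemma card_range_coboundary_mul [Finite V] [Finite G] [Nonempty V]
    (h : ∀ D : V → G, (∀ e, D (src e) = D (tgt e)) → ∀ v w, D v = D w) :
    Nat.card (Set.range (coboundary G src tgt)) * Nat.card G = Nat.card (V → G) := by
  have hker : Nat.card (coboundary G src tgt).ker = Nat.card G := by
    rw [← Nat.card_range_of_injective (Function.const_injective (α := V) (β := G)),
      ← ker_coboundary h]
    rfl
  rw [← hker, mul_comm, ← AddMonoidHom.coe_range]
  exact AddSubgroup.index_ker (coboundary G src tgt) ▸ AddSubgroup.card_mul_index _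

end Coboundary

section Torus

variable {N : ℕ}

lemma apply_eq_of_forall_ne_apply_add_one [NeZero N] {β : Type*} {f : ZMod N → β} {a : ZMod N}
    (h : ∀ x ≠ a, f x = f (x + 1)) (x : ZMod N) : f x = f a := by
  have key : ∀ k : ℕ, f (a - k) = f a := by
    intro k
    induction k with
    | zero => simp
    | succ k ih =>
      by_cases hk : a - ((k + 1 : ℕ) : ZMod N) = a
      · rw [hk]
      · rw [h _ hk, ← ih]
        congr 1
        push_cast
        ring
  simpa using key (a - x).val

def torusEdgeEnd (e : (ZMod N × ZMod N) × Fin 2) : ZMod N × ZMod N :=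
  e.1 + ![(1, 0), (0, 1)] e.2

/-- Horizontal edges off the diagonal and vertical edges on it: each row is a cycle with one
edge removed, and the diagonal edges join consecutive rows. Swapping the two coordinates
maps the complementary edges onto these. -/
def staircase (N : ℕ) [NeZero N] : Finset ((ZMod N × ZMod N) × Fin 2) :=
  {e | e.2 = 0 ↔ e.1.1 ≠ e.1.2}

lemma eq_of_forall_mem_staircase [NeZero N] {β : Type*} {D : ZMod N × ZMod N → β}
    (hD : ∀ e ∈ staircase N, D e.1 = D (torusEdgeEnd e)) (v w : ZMod N × ZMod N) :
    D v = D w := by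
  have hrow : ∀ v : ZMod N × ZMod N, D v = D (v.2, v.2) := fun v =>
    apply_eq_of_forall_ne_apply_add_one (f := fun x => D (x, v.2))
      (fun x hx => by simpa [staircase, torusEdgeEnd, hx] using hD ((x, v.2), 0)) v.1
  have hdiag : ∀ k : ZMod N, D (k, k) = D (0, 0) :=
    apply_eq_of_forall_ne_apply_add_one (f := fun k => D (k, k)) fun k _ => by
      have hk : D (k, k) = D (k, k + 1) := by simpa [staircase, torusEdgeEnd] using hD ((k, k), 1)
      exact hk.trans (hrow _)
  rw [hrow v, hrow w, hdiag v.2, hdiag w.2]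

lemma eq_of_forall_mem_compl_staircase [NeZero N] {β : Type*} {D : ZMod N × ZMod N → β}
    (hD : ∀ e ∈ (staircase N)ᶜ, D e.1 = D (torusEdgeEnd e)) (v w : ZMod N × ZMod N) :
    D v = D w := by
  have := eq_of_forall_mem_staircase (D := D ∘ Prod.swap) (fun e he => ?_) v.swap w.swap
  · simpa using this
  obtain ⟨⟨x, y⟩, d⟩ := e
  fin_cases d
  · have hxy : x ≠ y := by simpa [staircase] using he
    simpa [staircase, torusEdgeEnd, Ne.symm hxy] using hD ((y, x), 1)
  · obtain rfl : x = y := by simpa [staircase] using he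
    simpa [staircase, torusEdgeEnd] using hD ((x, x), 0)

lemma Ccut_eq_range_coboundary :
    Ccut N = Set.range (coboundary (ZMod 2) Prod.fst (torusEdgeEnd (N := N))) := by
  ext x
  constructor
  · rintro ⟨T, hT⟩
    refine ⟨T, funext fun ⟨v, d⟩ => ?_⟩
    fin_cases d
    · simp [coboundary, torusEdgeEnd, (hT v).1, CharTwo.sub_eq_add, add_comm]
    · simp [coboundary, torusEdgeEnd, (hT v).2, CharTwo.sub_eq_add, add_comm]
  · rintro ⟨T, rfl⟩
    exact ⟨T, fun v => by simp [coboundary, torusEdgeEnd, CharTwo.sub_eq_add, add_comm]⟩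

lemma card_Ccut [NeZero N] : Nat.card (Ccut N) = 2 ^ (N ^ 2 - 1) := by
  have h := card_range_coboundary_mul (G := ZMod 2) (src := Prod.fst)
    (tgt := torusEdgeEnd (N := N))
    fun D hD => eq_of_forall_mem_staircase fun e _ => hD e
  rw [← Ccut_eq_range_coboundary, Nat.card_fun, Nat.card_prod, Nat.card_zmod, Nat.card_zmod,
    ← sq] at h
  rw [← Nat.sub_add_cancel (Nat.one_le_pow 2 N (NeZero.pos N)), pow_succ] at h
  exact Nat.eq_of_mul_eq_mul_right two_pos h

theorem lambdaMax_codeState_Ccut [NeZero N] :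
    LambdaMax (codeState (Ccut N)) = (√(Nat.card (Ccut N)))⁻¹ := by
  rw [Ccut_eq_range_coboundary]
  exact lambdaMax_codeState (Set.range_nonempty _) isCompl_compl
    (injOn_restrict_range_coboundary fun _ hD => eq_of_forall_mem_staircase hD)
    (injOn_restrict_range_coboundary fun _ hD => eq_of_forall_mem_compl_staircase hD)

end Torus

theorem toric_code_geometric_entanglement_of_spins_general
    (N : ℕ) [NeZero N] :
    LambdaMax (codeState (Ccut N)) ^ 2 = ((2 : ℝ) ^ (N ^ 2 - 1))⁻¹ ∧
    EG (codeState (Ccut N)) = (N : ℝ) ^ 2 - 1 := by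
  have hsq : LambdaMax (codeState (Ccut N)) ^ 2 = ((2 : ℝ) ^ (N ^ 2 - 1))⁻¹ := by
    rw [lambdaMax_codeState_Ccut, card_Ccut, inv_pow, Real.sq_sqrt (by positivity)]
    norm_cast
  refine ⟨hsq, ?_⟩
  rw [EG, hsq, Real.logb_inv, neg_neg, Real.logb_pow, Real.logb_self_eq_one one_lt_two, mul_one,
    Nat.cast_sub (Nat.one_le_pow 2 N (NeZero.pos N))]
  push_cast
  ring

/-- Theorem 1: the toric code ground state on the N × N torus (N positive
and even) has squared maximal overlap `2^{-(N²-1)}`, i.e. geometric entanglement of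
spins `n_s - 1 = N² - 1`. -/
theorem toric_code_geometric_entanglement_of_spins
    (N : ℕ) [NeZero N] (hpos : 0 < N) (heven : Even N) :
    LambdaMax (codeState (Ccut N)) ^ 2 = ((2 : ℝ) ^ (N ^ 2 - 1))⁻¹ ∧
    EG (codeState (Ccut N)) = (N : ℝ) ^ 2 - 1 :=
  toric_code_geometric_entanglement_of_spins_general N

end GeomEnt
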